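/- The code C15 = {∅, {2,3}, {1,5}, {4,5}, {3,4}, {1,2}, {1,4,5}, {1,2,5}, {1,2,3}, {2,3,4}, {3,4,5}} on five neurons is not a closed convex code: no closed convex sets U₁,…,U₅ in any ℝᵈ have code of cover equal to C15. -/

import Mathlib

/-!
Let `K = U₀ ∩ U₁ ∩ U₂` and `M = [a, b]`, where `a` and `b` realise the codewords `{0,3,4}` and
`{2,3,4}`. The code forces `U₀ ⊆ U₁ ∪ U₄`, `U₁ ⊆ U₀ ∪ U₂`, `U₂ ⊆ U₁ ∪ U₃` and
`K ∩ (U₃ ∪ U₄) = ∅`, while `M ⊆ U₃` by convexity. Take `x ∈ K` closest to `M`. By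
connectedness, `[x, a] ⊆ U₀` meets `U₁ ∩ U₄` at some `z₁` and `[x, b] ⊆ U₂` meets `U₁ ∩ U₃` at
some `z₂`; then `[z₁, z₂] ⊆ U₁` meets `U₀ ∩ U₂` at a point `w ∈ K`. The distance to the convex
set `M` is a convex function vanishing at `a` and `b`, and `z₁, z₂ ≠ x`, so `w` is strictly
closer to `M` than `x`.
-/

def codeOfCover {n : ℕ} {X : Type*} (U : Fin n → Set X) : Set (Set (Fin n)) :=
  {σ | ∃ x : X, ∀ i, x ∈ U i ↔ i ∈ σ}

open Set Metric

section Segment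

variable {E : Type*} [AddCommGroup E] [Module ℝ E] [TopologicalSpace E] [ContinuousAdd E]
  [ContinuousSMul ℝ E]

theorem isCompact_segment (x y : E) : IsCompact (segment ℝ x y) := by
  rw [segment_eq_image]
  exact isCompact_Icc.image (by fun_prop)

theorem exists_mem_inter_of_segment_subset_union {V W : Set E} (hV : IsClosed V)
    (hW : IsClosed W) {x y : E} (hx : x ∈ V) (hy : y ∈ W) (hxy : segment ℝ x y ⊆ V ∪ W) :
    ∃ z ∈ segment ℝ x y, z ∈ V ∧ z ∈ W :=
  isPreconnected_closed_iff.1 (convex_segment x y).isPreconnected V W hV hW hxy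
    ⟨x, left_mem_segment ℝ x y, hx⟩ ⟨y, right_mem_segment ℝ x y, hy⟩

end Segment

theorem exists_isMinOn_infDist {α : Type*} [PseudoMetricSpace α] [ProperSpace α] {K M : Set α}
    (hK : IsClosed K) (hKne : K.Nonempty) (hM : IsCompact M) (hMne : M.Nonempty) :
    ∃ x ∈ K, IsMinOn (infDist · M) K x := by
  obtain ⟨p, hpM, hp⟩ := hM.exists_isMinOn hMne (continuous_infDist_pt K).continuousOn
  obtain ⟨x, hxK, hxp⟩ := hK.exists_infDist_eq_dist hKne p
  refine ⟨x, hxK, fun y hyK => ?_⟩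
  obtain ⟨q, hqM, hyq⟩ := hM.exists_infDist_eq_dist hMne y
  calc infDist x M ≤ dist x p := infDist_le_dist_of_mem hpM
    _ = infDist p K := by rw [hxp, dist_comm]
    _ ≤ infDist q K := hp hqM
    _ ≤ dist q y := infDist_le_dist_of_mem hyK
    _ = infDist y M := by rw [hyq, dist_comm]

section InfDist

variable {E : Type*} [SeminormedAddCommGroup E] [NormedSpace ℝ E] {M : Set E}

theorem dist_combo_le (x y p q : E) {a b : ℝ} (ha : 0 ≤ a) (hb : 0 ≤ b) :
    dist (a • x + b • y) (a • p + b • q) ≤ a * dist x p + b * dist y q :=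
  calc dist (a • x + b • y) (a • p + b • q) ≤ dist (a • x) (a • p) + dist (b • y) (b • q) :=
        dist_add_add_le _ _ _ _
    _ = a * dist x p + b * dist y q := by
        rw [dist_smul₀, dist_smul₀, Real.norm_of_nonneg ha, Real.norm_of_nonneg hb]

theorem Convex.convexOn_infDist (hM : Convex ℝ M) : ConvexOn ℝ univ (infDist · M) := by
  refine ⟨convex_univ, fun x _ y _ a b ha hb hab => ?_⟩
  rcases M.eq_empty_or_nonempty with rfl | hne
  · simp
  refine le_of_forall_pos_le_add fun ε hε => ?_
  obtain ⟨p, hpM, hxp⟩ := (infDist_lt_iff hne).1 (lt_add_of_pos_right (infDist x M) hε)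
  obtain ⟨q, hqM, hyq⟩ := (infDist_lt_iff hne).1 (lt_add_of_pos_right (infDist y M) hε)
  calc infDist (a • x + b • y) M ≤ dist (a • x + b • y) (a • p + b • q) :=
        infDist_le_dist_of_mem (hM hpM hqM ha hb hab)
    _ ≤ a * dist x p + b * dist y q := dist_combo_le x y p q ha hb
    _ ≤ a * (infDist x M + ε) + b * (infDist y M + ε) := by gcongr
    _ = a • infDist x M + b • infDist y M + ε := by
        rw [smul_eq_mul, smul_eq_mul]; linear_combination ε * hab

theorem infDist_lt_of_mem_segment (hM : Convex ℝ M) {x a z : E} (ha : a ∈ M)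
    (hx : 0 < infDist x M) (hz : z ∈ segment ℝ x a) (hzx : z ≠ x) :
    infDist z M < infDist x M := by
  obtain ⟨s, t, hs, ht, hst, rfl⟩ := hz
  have ht0 : 0 < t := ht.lt_of_ne' fun h => hzx <| by
    rw [h, zero_smul, add_zero, show s = 1 by linarith, one_smul]
  calc infDist (s • x + t • a) M ≤ s * infDist x M + t * infDist a M :=
        hM.convexOn_infDist.2 trivial trivial hs ht hst
    _ = infDist x M - t * infDist x M := by
        rw [infDist_zero_of_mem ha]; linear_combination infDist x M * hst
    _ < infDist x M := sub_lt_self _ (mul_pos ht0 hx)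

end InfDist

section C15Configuration

variable {E : Type*} [NormedAddCommGroup E] [NormedSpace ℝ E] {U : Fin 5 → Set E}

theorem exists_closer_of_C15_configuration (hcl : ∀ i, IsClosed (U i))
    (hcv : ∀ i, Convex ℝ (U i)) (h0 : U 0 ⊆ U 1 ∪ U 4) (h1 : U 1 ⊆ U 0 ∪ U 2)
    (h2 : U 2 ⊆ U 1 ∪ U 3) (hK : U 0 ∩ U 1 ∩ U 2 ⊆ (U 3 ∪ U 4)ᶜ) {a b x : E}
    (ha : a ∈ U 0 ∩ U 3 ∩ U 4) (hb : b ∈ U 2 ∩ U 3) (hx : x ∈ U 0 ∩ U 1 ∩ U 2) :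
    ∃ w ∈ U 0 ∩ U 1 ∩ U 2, infDist w (segment ℝ a b) < infDist x (segment ℝ a b) := by
  obtain ⟨⟨ha0, ha3⟩, ha4⟩ := ha
  obtain ⟨hb2, hb3⟩ := hb
  have hx34 := hK hx
  obtain ⟨⟨hx0, hx1⟩, hx2⟩ := hx
  set M := segment ℝ a b
  have hM : Convex ℝ M := convex_segment a b
  have hxM : 0 < infDist x M := by
    refine ((isCompact_segment a b).isClosed.notMem_iff_infDist_pos
      ⟨a, left_mem_segment ℝ a b⟩).1 fun h => hx34 (Or.inl ?_)
    exact (hcv 3).segment_subset ha3 hb3 h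
  obtain ⟨za, hza, hza1, hza4⟩ := exists_mem_inter_of_segment_subset_union (hcl 1) (hcl 4)
    hx1 ha4 (((hcv 0).segment_subset hx0 ha0).trans h0)
  obtain ⟨zb, hzb, hzb1, hzb3⟩ := exists_mem_inter_of_segment_subset_union (hcl 1) (hcl 3)
    hx1 hb3 (((hcv 2).segment_subset hx2 hb2).trans h2)
  obtain ⟨w, hw, hw0, hw2⟩ := exists_mem_inter_of_segment_subset_union (hcl 0) (hcl 2)
    ((hcv 0).segment_subset hx0 ha0 hza) ((hcv 2).segment_subset hx2 hb2 hzb)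
    (((hcv 1).segment_subset hza1 hzb1).trans h1)
  refine ⟨w, ⟨⟨hw0, (hcv 1).segment_subset hza1 hzb1 hw⟩, hw2⟩, ?_⟩
  have hza_lt : infDist za M < infDist x M := infDist_lt_of_mem_segment hM
    (left_mem_segment ℝ a b) hxM hza (by rintro rfl; exact hx34 (Or.inr hza4))
  have hzb_lt : infDist zb M < infDist x M := infDist_lt_of_mem_segment hM
    (right_mem_segment ℝ a b) hxM hzb (by rintro rfl; exact hx34 (Or.inl hzb3))
  calc infDist w M ≤ max (infDist za M) (infDist zb M) :=
        hM.convexOn_infDist.le_on_segment trivial trivial hw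
    _ < infDist x M := max_lt hza_lt hzb_lt

theorem not_C15_configuration [ProperSpace E] (hcl : ∀ i, IsClosed (U i))
    (hcv : ∀ i, Convex ℝ (U i)) (h0 : U 0 ⊆ U 1 ∪ U 4) (h1 : U 1 ⊆ U 0 ∪ U 2)
    (h2 : U 2 ⊆ U 1 ∪ U 3) (hK : U 0 ∩ U 1 ∩ U 2 ⊆ (U 3 ∪ U 4)ᶜ) {a b x : E}
    (ha : a ∈ U 0 ∩ U 3 ∩ U 4) (hb : b ∈ U 2 ∩ U 3) (hx : x ∈ U 0 ∩ U 1 ∩ U 2) : False := by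
  obtain ⟨y, hy, hmin⟩ := exists_isMinOn_infDist (((hcl 0).inter (hcl 1)).inter (hcl 2))
    ⟨x, hx⟩ (isCompact_segment a b) ⟨a, left_mem_segment ℝ a b⟩
  obtain ⟨w, hw, hlt⟩ := exists_closer_of_C15_configuration hcl hcv h0 h1 h2 hK ha hb hy
  exact (hmin hw).not_gt hlt

end C15Configuration

theorem setOf_mem_mem_codeOfCover {n : ℕ} {X : Type*} (U : Fin n → Set X) (x : X) :
    {i | x ∈ U i} ∈ codeOfCover U :=
  ⟨x, fun _ => Iff.rfl⟩

-- The paper's neurons `1,…,5` are `0,…,4` here.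
def C15 : Set (Set (Fin 5)) :=
  {∅, {1, 2}, {0, 4}, {3, 4}, {2, 3}, {0, 1}, {0, 3, 4}, {0, 1, 4}, {0, 1, 2}, {1, 2, 3},
    {2, 3, 4}}

theorem C15_properties : ∀ σ ∈ C15, (0 ∈ σ → 1 ∈ σ ∨ 4 ∈ σ) ∧ (1 ∈ σ → 0 ∈ σ ∨ 2 ∈ σ) ∧
    (2 ∈ σ → 1 ∈ σ ∨ 3 ∈ σ) ∧ (0 ∈ σ → 1 ∈ σ → 2 ∈ σ → ¬(3 ∈ σ ∨ 4 ∈ σ)) := by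
  simp only [C15, mem_insert_iff, mem_singleton_iff]
  rintro σ (rfl | rfl | rfl | rfl | rfl | rfl | rfl | rfl | rfl | rfl | rfl) <;> simp

/-- The code `C15` (neurons `1,…,5` written as `0,…,4`) is not a closed convex code. -/
theorem stmt_16 :
    ¬ ∃ (d : ℕ) (U : Fin 5 → Set (EuclideanSpace ℝ (Fin d))),
      (∀ i, IsClosed (U i)) ∧ (∀ i, Convex ℝ (U i)) ∧
      codeOfCover U = ({∅, {1, 2}, {0, 4}, {3, 4}, {2, 3}, {0, 1}, {0, 3, 4},
        {0, 1, 4}, {0, 1, 2}, {1, 2, 3}, {2, 3, 4}} : Set (Set (Fin 5))) := by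
  rintro ⟨d, U, hcl, hcv, hcode⟩
  replace hcode : codeOfCover U = C15 := hcode
  have hprop (y) := C15_properties _ (hcode ▸ setOf_mem_mem_codeOfCover U y)
  have hpt (σ) (hσ : σ ∈ C15) : ∃ y, ∀ i, y ∈ U i ↔ i ∈ σ := (hcode ▸ hσ : σ ∈ codeOfCover U)
  obtain ⟨a, ha⟩ := hpt {0, 3, 4} (by simp [C15])
  obtain ⟨b, hb⟩ := hpt {2, 3, 4} (by simp [C15])
  obtain ⟨x, hx⟩ := hpt {0, 1, 2} (by simp [C15])
  exact not_C15_configuration (a := a) (b := b) (x := x) hcl hcv (fun y => (hprop y).1)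
    (fun y => (hprop y).2.1) (fun y => (hprop y).2.2.1)
    (fun y ⟨⟨hy0, hy1⟩, hy2⟩ => (hprop y).2.2.2 hy0 hy1 hy2) (by simp [ha]) (by simp [hb])
    (by simp [hx])
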